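/- Let n ≥ 2, p, q ∈ (0,1), let the prior on Θ_n be uniform, fix θ ∈ Θ_n, let a ∈ (0, 1/2) with (e/a)·ρ(p,q)^{n/2} < 1, and let k be an integer with k ≥ a·n. Then P_θ Π(B_n(θ,k) | X^n) ≥ 1 − (1/2)·((e/a)·ρ(p,q)^{n/2})^{a·n}·(1 − (e/a)·ρ(p,q)^{n/2})^{-1}. -/

import Mathlib

open Finset Real Filter

/-- The set of potential edges of an `n`-vertex graph: pairs `(i,j)` with `i < j`. -/
abbrev Edge (n : ℕ) := {e : Fin n × Fin n // e.1 < e.2}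

/-- An observed graph: an edge indicator for each potential edge. -/
abbrev ObsGraph (n : ℕ) := Edge n → Bool

/-- Edge probability under assignment `θ`: `p` within communities, `q` between. -/
noncomputable def edgeProb {n : ℕ} (p q : ℝ) (θ : Fin n → Bool) (e : Edge n) : ℝ :=
  if θ e.val.1 = θ e.val.2 then p else q

/-- Probability mass function of the observed graph under `θ`. -/
noncomputable def graphPMF {n : ℕ} (p q : ℝ) (θ : Fin n → Bool) (x : ObsGraph n) : ℝ :=
  ∏ e : Edge n, if x e then edgeProb p q θ e else 1 - edgeProb p q θ e

/-- Hellinger affinity of Bernoulli parameters. -/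
noncomputable def rho (p q : ℝ) : ℝ := Real.sqrt (p * q) + Real.sqrt ((1 - p) * (1 - q))

/-- Edges whose probability changes from `p` to `q` when replacing `θ` by `η`. -/
def D1 {n : ℕ} (θ η : Fin n → Bool) : Finset (Fin n × Fin n) :=
  Finset.univ.filter fun e => e.1 < e.2 ∧ θ e.1 = θ e.2 ∧ η e.1 ≠ η e.2

/-- Edges whose probability changes from `q` to `p` when replacing `θ` by `η`. -/
def D2 {n : ℕ} (θ η : Fin n → Bool) : Finset (Fin n × Fin n) :=
  Finset.univ.filter fun e => e.1 < e.2 ∧ θ e.1 ≠ θ e.2 ∧ η e.1 = η e.2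

/-- Hamming distance. -/
def hdist {n : ℕ} (θ η : Fin n → Bool) : ℕ := (Finset.univ.filter fun i => θ i ≠ η i).card

/-- The metric `k(θ,η) = h(θ,η) ∧ (n - h(θ,η))`. -/
def kdist {n : ℕ} (θ η : Fin n → Bool) : ℕ := min (hdist θ η) (n - hdist θ η)

/-- Size of the smallest community. -/
def countOnes {n : ℕ} (θ : Fin n → Bool) : ℕ := (Finset.univ.filter fun i => θ i = true).card

/-- The parameter space `Θ_n`. -/
def Theta (n : ℕ) : Finset (Fin n → Bool) :=
  Finset.univ.filter fun θ => 2 * countOnes θ ≤ n ∧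
    ∀ i : Fin n, 2 * countOnes θ = n → (i : ℕ) = 0 → θ i = false

/-- Posterior mass of `A ⊆ Θ_n` given data `x`, under prior mass function `π`. -/
noncomputable def postMass {n : ℕ} (p q : ℝ) (pri : (Fin n → Bool) → ℝ)
    (A : Finset (Fin n → Bool)) (x : ObsGraph n) : ℝ :=
  (∑ η ∈ A, pri η * graphPMF p q η x) / (∑ η ∈ Theta n, pri η * graphPMF p q η x)

/-- `P_θ`-expectation of the posterior mass of `A`. -/
noncomputable def expPostMass {n : ℕ} (p q : ℝ) (pri : (Fin n → Bool) → ℝ)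
    (θ : Fin n → Bool) (A : Finset (Fin n → Bool)) : ℝ :=
  ∑ x : ObsGraph n, graphPMF p q θ x * postMass p q pri A x

/-- The uniform prior on `Θ_n`. -/
noncomputable def unifPrior (n : ℕ) : (Fin n → Bool) → ℝ := fun _ => ((2:ℝ) ^ (n - 1))⁻¹

/-- Hamming ball `B_n(θ,k)` inside `Θ_n`. -/
def hball {n : ℕ} (θ : Fin n → Bool) (k : ℕ) : Finset (Fin n → Bool) :=
  (Theta n).filter fun η => kdist η θ ≤ k

/-!
Outside the ball the posterior mass is controlled pairwise. Since the normalising sum contains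
the terms of `θ` and `η`, `p_θ Π({η} | x) ≤ p_θ p_η / (p_θ + p_η) ≤ √(p_θ p_η) / 2`, and summing
over graphs gives `ρ^{|D(θ,η)|} / 2`, where `D(θ,η)` is the set of edges whose probability changes;
`|D(θ,η)| = h (n - h) ≥ n k(η,θ) / 2`. As `Θ_n` contains only one of `η` and its relabelling `!η`,
at most `C(n,m) ≤ (e/a)^m` of its elements lie at distance `k(η,θ) = m ≥ a n`, so the mass outside
`B_n(θ,k)` is at most half the tail `∑_{m > k} r^m ≤ r^{a n} / (1 - r)` with `r = (e/a) ρ^{n/2}`.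
-/

lemma sqrt_mul_le_add_div_two {x y : ℝ} (hx : 0 ≤ x) (hy : 0 ≤ y) : √(x * y) ≤ (x + y) / 2 := by
  have h := two_mul_le_add_sq √x √y
  rw [Real.sq_sqrt hx, Real.sq_sqrt hy] at h
  rw [Real.sqrt_mul hx]
  linarith

lemma mul_div_le_sqrt_mul_div_two {a b c Z : ℝ} (ha : 0 < a) (hb : 0 < b) (hc : 0 < c)
    (hZ : c * a + c * b ≤ Z) : a * (c * b / Z) ≤ √(a * b) / 2 := by
  have hsq := Real.sq_sqrt (mul_pos ha hb).le
  have hamgm := sqrt_mul_le_add_div_two ha.le hb.le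
  calc a * (c * b / Z) ≤ a * (c * b / (c * a + c * b)) := by gcongr
    _ = a * b / (a + b) := by field_simp
    _ ≤ √(a * b) / 2 := by
      rw [div_le_div_iff₀ (by positivity) two_pos]
      nlinarith [Real.sqrt_nonneg (a * b)]

lemma rho_comm (p q : ℝ) : rho p q = rho q p := by
  simp only [rho, mul_comm]

lemma rho_self {p : ℝ} (hp : p ∈ Set.Icc (0:ℝ) 1) : rho p p = 1 := by
  rw [rho, Real.sqrt_mul_self hp.1, Real.sqrt_mul_self (sub_nonneg.2 hp.2)]
  ring

lemma rho_pos {p q : ℝ} (hp : 0 < p) (hq : 0 < q) : 0 < rho p q :=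
  add_pos_of_pos_of_nonneg (Real.sqrt_pos.2 (mul_pos hp hq)) (Real.sqrt_nonneg _)

lemma rho_le_one {p q : ℝ} (hp : p ∈ Set.Icc (0:ℝ) 1) (hq : q ∈ Set.Icc (0:ℝ) 1) :
    rho p q ≤ 1 := by
  have h₁ := sqrt_mul_le_add_div_two hp.1 hq.1
  have h₂ := sqrt_mul_le_add_div_two (sub_nonneg.2 hp.2) (sub_nonneg.2 hq.2)
  rw [rho]
  linarith

section BernoulliProduct

variable {ι : Type*} [Fintype ι]

noncomputable def bernoulliProd (P : ι → ℝ) (x : ι → Bool) : ℝ :=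
  ∏ i, if x i then P i else 1 - P i

lemma bernoulliProd_pos {P : ι → ℝ} (hP : ∀ i, P i ∈ Set.Ioo (0:ℝ) 1) (x : ι → Bool) :
    0 < bernoulliProd P x :=
  prod_pos fun i _ => by split <;> linarith [(hP i).1, (hP i).2]

lemma sum_bernoulliProd [DecidableEq ι] (P : ι → ℝ) : ∑ x, bernoulliProd P x = 1 := by
  simp only [bernoulliProd]
  rw [← Fintype.prod_sum (fun i (b : Bool) => if b then P i else 1 - P i)]
  simp

lemma sum_sqrt_bernoulliProd_mul [DecidableEq ι] {P Q : ι → ℝ} (hP : ∀ i, P i ∈ Set.Icc (0:ℝ) 1)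
    (hQ : ∀ i, Q i ∈ Set.Icc (0:ℝ) 1) :
    ∑ x, √(bernoulliProd P x * bernoulliProd Q x) = ∏ i, rho (P i) (Q i) := by
  let g : ι → Bool → ℝ := fun i b =>
    √((if b then P i else 1 - P i) * (if b then Q i else 1 - Q i))
  have hfactor : ∀ x : ι → Bool,
      √(bernoulliProd P x * bernoulliProd Q x) = ∏ i, g i (x i) := by
    intro x
    rw [bernoulliProd, bernoulliProd, ← prod_mul_distrib, Real.sqrt_prod]
    intro i _
    obtain ⟨hP₀, hP₁⟩ := hP i
    obtain ⟨hQ₀, hQ₁⟩ := hQ i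
    split
    · exact mul_nonneg hP₀ hQ₀
    · exact mul_nonneg (sub_nonneg.2 hP₁) (sub_nonneg.2 hQ₁)
  simp_rw [hfactor, ← Fintype.prod_sum g, Fintype.sum_bool, g, rho]
  simp

end BernoulliProduct

section GraphModel

variable {n : ℕ} {p q : ℝ}

lemma graphPMF_eq_bernoulliProd (θ : Fin n → Bool) :
    graphPMF p q θ = bernoulliProd (edgeProb p q θ) := rfl

lemma edgeProb_mem {S : Set ℝ} (hp : p ∈ S) (hq : q ∈ S) (θ : Fin n → Bool) (e : Edge n) :
    edgeProb p q θ e ∈ S := by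
  unfold edgeProb
  split <;> assumption

lemma graphPMF_pos (hp : p ∈ Set.Ioo (0:ℝ) 1) (hq : q ∈ Set.Ioo (0:ℝ) 1)
    (θ : Fin n → Bool) (x : ObsGraph n) : 0 < graphPMF p q θ x :=
  bernoulliProd_pos (edgeProb_mem hp hq θ) x

lemma sum_graphPMF (θ : Fin n → Bool) : ∑ x, graphPMF p q θ x = 1 :=
  sum_bernoulliProd _

/-- The paper's `D₁ ∪ D₂`: the edges whose probability changes between `θ` and `η`. -/
def changedEdges (θ η : Fin n → Bool) : Finset (Edge n) :=
  {e | ¬(θ e.1.1 = θ e.1.2 ↔ η e.1.1 = η e.1.2)}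

lemma rho_edgeProb (hp : p ∈ Set.Icc (0:ℝ) 1) (hq : q ∈ Set.Icc (0:ℝ) 1)
    (θ η : Fin n → Bool) (e : Edge n) :
    rho (edgeProb p q θ e) (edgeProb p q η e) = if e ∈ changedEdges θ η then rho p q else 1 := by
  by_cases hθ : θ e.1.1 = θ e.1.2 <;> by_cases hη : η e.1.1 = η e.1.2 <;>
    simp [changedEdges, edgeProb, hθ, hη, rho_self hp, rho_self hq, rho_comm q p]

lemma sum_sqrt_graphPMF_mul (hp : p ∈ Set.Icc (0:ℝ) 1) (hq : q ∈ Set.Icc (0:ℝ) 1)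
    (θ η : Fin n → Bool) :
    ∑ x, √(graphPMF p q θ x * graphPMF p q η x) = rho p q ^ #(changedEdges θ η) := by
  rw [graphPMF_eq_bernoulliProd, graphPMF_eq_bernoulliProd,
    sum_sqrt_bernoulliProd_mul (edgeProb_mem hp hq θ) (edgeProb_mem hp hq η)]
  simp_rw [rho_edgeProb hp hq, prod_ite_mem, univ_inter, prod_const]

end GraphModel

section Combinatorics

variable {n : ℕ}

lemma card_cut_edges (S : Finset (Fin n)) :
    #{e : Edge n | ¬(e.1.1 ∈ S ↔ e.1.2 ∈ S)} = #S * (n - #S) := by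
  have hcompl : n - #S = #Sᶜ := by rw [card_compl, Fintype.card_fin]
  rw [hcompl, ← card_product]
  symm
  refine card_bij' (fun st hst => ⟨(min st.1 st.2, max st.1 st.2), ?lt⟩)
    (fun e _ => if e.1.1 ∈ S then e.1 else e.1.swap) ?cut ?product ?left_inv ?right_inv
  case lt =>
    simp only [mem_product, mem_compl] at hst
    exact min_lt_max.2 fun h => hst.2 (h ▸ hst.1)
  case cut | left_inv =>
    rintro ⟨s, t⟩ hst
    simp only [mem_product, mem_compl] at hst
    rcases lt_or_gt_of_ne (fun h : s = t => hst.2 (h ▸ hst.1)) with h | h <;> simp [h.le, hst]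
  case product | right_inv =>
    rintro ⟨⟨i, j⟩, hij⟩ he
    simp only [mem_filter, mem_univ, true_and] at he
    by_cases hi : i ∈ S <;> simp_all [hij.le]

lemma hdist_eq_hammingDist (θ η : Fin n → Bool) : hdist θ η = hammingDist θ η := rfl

lemma card_changedEdges (θ η : Fin n → Bool) :
    #(changedEdges θ η) = hdist θ η * (n - hdist θ η) := by
  rw [hdist, ← card_cut_edges]
  congr 1
  ext e
  simp only [changedEdges, mem_filter, mem_univ, true_and]
  cases θ e.1.1 <;> cases θ e.1.2 <;> cases η e.1.1 <;> cases η e.1.2 <;> decide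

-- `h (n - h) = k (n - k)` with `k ≤ n / 2`, so `n - k ≥ n / 2`
lemma mul_kdist_le_two_mul_card_changedEdges (θ η : Fin n → Bool) :
    n * kdist η θ ≤ 2 * #(changedEdges θ η) := by
  rw [card_changedEdges, kdist, hdist_eq_hammingDist η, hammingDist_comm, ← hdist_eq_hammingDist]
  have hle : hdist θ η ≤ n := hammingDist_le_card_fintype.trans (by simp)
  generalize hdist θ η = h at hle ⊢
  clear θ η
  obtain ⟨d, rfl⟩ := Nat.exists_eq_add_of_le hle
  rw [Nat.add_sub_cancel_left]
  rcases le_total h d with hd | hd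
  · rw [min_eq_left hd]; nlinarith
  · rw [min_eq_right hd]; nlinarith

lemma card_filter_not_eq (P : Fin n → Prop) [DecidablePred P] :
    #{i | ¬P i} = n - #{i | P i} := by
  rw [filter_not, card_sdiff_of_subset (filter_subset _ _), card_univ, Fintype.card_fin]

lemma hdist_flip (η θ : Fin n → Bool) : hdist (fun i => !η i) θ = n - hdist η θ := by
  rw [hdist, hdist, ← card_filter_not_eq]
  congr 1
  refine filter_congr fun i _ => ?_
  cases η i <;> cases θ i <;> decide

lemma countOnes_flip (η : Fin n → Bool) : countOnes (fun i => !η i) = n - countOnes η := by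
  rw [countOnes, countOnes, ← card_filter_not_eq]
  congr 1
  refine filter_congr fun i _ => ?_
  cases η i <;> decide

-- For `n ≥ 1`, `Θ_n` never contains both: in the balanced case it fixes the label of vertex `0`.
lemma flip_eq_of_mem_Theta {η : Fin n → Bool} (hη : η ∈ Theta n)
    (hflip : (fun i => !η i) ∈ Theta n) : (fun i => !η i) = η := by
  rcases n with _ | n
  · exact funext fun i => i.elim0
  simp only [Theta, mem_filter, mem_univ, true_and, countOnes_flip] at hη hflip
  have hle : countOnes η ≤ n + 1 := (card_filter_le _ _).trans (by simp)
  have hhalf : 2 * countOnes η = n + 1 := by omega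
  have h₁ := hη.2 0 hhalf rfl
  have h₂ := hflip.2 0 (by omega) rfl
  simp [h₁] at h₂

lemma card_filter_kdist_eq_le (θ : Fin n → Bool) (m : ℕ) :
    #{η ∈ Theta n | kdist η θ = m} ≤ n.choose m := by
  -- `η` or `!η`, whichever is at Hamming distance `m` from `θ`, determines `η` on `Θ_n`
  let g : (Fin n → Bool) → (Fin n → Bool) := fun η => if hdist η θ = m then η else fun i => !η i
  let diff : (Fin n → Bool) → Finset (Fin n) := fun v => {i | v i ≠ θ i}
  have hdiff : Function.Injective diff := by
    intro v w hvw
    funext i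
    have hi := congrArg (i ∈ ·) hvw
    simp only [diff, mem_filter, mem_univ, true_and, eq_iff_iff] at hi
    cases hv : v i <;> cases hw : w i <;> cases θ i <;> simp_all
  have hg : Set.InjOn g {η | η ∈ Theta n} := by
    intro η₁ h₁ η₂ h₂ heq
    by_cases c₁ : hdist η₁ θ = m <;> by_cases c₂ : hdist η₂ θ = m <;>
      simp only [g, c₁, c₂, if_true, if_false] at heq
    · exact heq
    · exact heq.trans (flip_eq_of_mem_Theta h₂ (heq ▸ h₁))
    · exact (flip_eq_of_mem_Theta h₁ (heq ▸ h₂)).symm.trans heq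
    · funext i
      simpa using congrFun heq i
  calc #{η ∈ Theta n | kdist η θ = m}
      ≤ #(powersetCard m (univ : Finset (Fin n))) := by
        refine card_le_card_of_injOn (diff ∘ g) (fun η hη => ?_)
          (hdiff.comp_injOn (hg.mono fun η hη => (mem_filter.1 hη).1))
        simp only [mem_coe, mem_filter] at hη
        have hkd := hη.2
        rw [kdist] at hkd
        simp only [mem_coe, mem_powersetCard, subset_univ, true_and, Function.comp, g]
        split_ifs with h
        · exact h
        · rw [← hdist, hdist_flip]
          omega
    _ = n.choose m := by simp

end Combinatorics

lemma unifPrior_pos (n : ℕ) (η : Fin n → Bool) : 0 < unifPrior n η := by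
  unfold unifPrior
  positivity

section Posterior

variable {n : ℕ} {p q : ℝ} (hp : p ∈ Set.Ioo (0:ℝ) 1) (hq : q ∈ Set.Ioo (0:ℝ) 1)
  {θ : Fin n → Bool} (hθ : θ ∈ Theta n)
include hp hq hθ

lemma expPostMass_filter_add_filter_not {pri : (Fin n → Bool) → ℝ} (hpri : ∀ η, 0 < pri η)
    (P : (Fin n → Bool) → Prop) [DecidablePred P] :
    expPostMass p q pri θ {η ∈ Theta n | P η} + expPostMass p q pri θ {η ∈ Theta n | ¬P η} = 1 := by
  have hpost : ∀ x, postMass p q pri {η ∈ Theta n | P η} x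
      + postMass p q pri {η ∈ Theta n | ¬P η} x = 1 := by
    intro x
    have hZ : 0 < ∑ η ∈ Theta n, pri η * graphPMF p q η x :=
      sum_pos' (fun η _ => (mul_pos (hpri η) (graphPMF_pos hp hq η x)).le)
        ⟨θ, hθ, mul_pos (hpri θ) (graphPMF_pos hp hq θ x)⟩
    rw [postMass, postMass, ← add_div, sum_filter_add_sum_filter_not, div_self hZ.ne']
  simp only [expPostMass, ← sum_add_distrib, ← mul_add, hpost, mul_one, sum_graphPMF]

lemma expPostMass_le_sum_rho_pow {A : Finset (Fin n → Bool)} (hA : A ⊆ Theta n) (hθA : θ ∉ A) :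
    expPostMass p q (unifPrior n) θ A ≤ ∑ η ∈ A, rho p q ^ #(changedEdges θ η) / 2 := by
  have hterm : ∀ x, ∀ η ∈ A, graphPMF p q θ x * (unifPrior n η * graphPMF p q η x
      / ∑ η' ∈ Theta n, unifPrior n η' * graphPMF p q η' x)
        ≤ √(graphPMF p q θ x * graphPMF p q η x) / 2 := by
    intro x η hη
    -- the normalising sum contains the terms of `θ` and `η`, and the uniform prior cancels
    refine mul_div_le_sqrt_mul_div_two (graphPMF_pos hp hq θ x) (graphPMF_pos hp hq η x)
      (unifPrior_pos n η) ?_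
    have hpair : ({θ, η} : Finset _) ⊆ Theta n := insert_subset hθ (singleton_subset_iff.2 (hA hη))
    have hne : θ ≠ η := fun h => hθA (h ▸ hη)
    calc unifPrior n η * graphPMF p q θ x + unifPrior n η * graphPMF p q η x
        = ∑ v ∈ {θ, η}, unifPrior n v * graphPMF p q v x :=
          (sum_pair (f := fun v => unifPrior n v * graphPMF p q v x) hne).symm
      _ ≤ _ := sum_le_sum_of_subset_of_nonneg hpair fun v _ _ =>
          (mul_pos (unifPrior_pos n v) (graphPMF_pos hp hq v x)).le
  calc expPostMass p q (unifPrior n) θ A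
      = ∑ η ∈ A, ∑ x, graphPMF p q θ x * (unifPrior n η * graphPMF p q η x
          / ∑ η' ∈ Theta n, unifPrior n η' * graphPMF p q η' x) := by
        simp only [expPostMass, postMass, sum_div, mul_sum]
        exact sum_comm
    _ ≤ ∑ η ∈ A, ∑ x, √(graphPMF p q θ x * graphPMF p q η x) / 2 :=
        sum_le_sum fun η hη => sum_le_sum fun x _ => hterm x η hη
    _ = ∑ η ∈ A, rho p q ^ #(changedEdges θ η) / 2 := by
        simp_rw [← sum_div, sum_sqrt_graphPMF_mul (Set.Ioo_subset_Icc_self hp)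
          (Set.Ioo_subset_Icc_self hq)]

end Posterior

lemma choose_le_exp_one_div_pow {n m : ℕ} {a : ℝ} (ha : 0 < a) (hm : a * n ≤ m) :
    (n.choose m : ℝ) ≤ (Real.exp 1 / a) ^ m := by
  obtain rfl | hm₀ := Nat.eq_zero_or_pos m
  · simp
  have hmR : (0:ℝ) < m := by exact_mod_cast hm₀
  have hnm : (n:ℝ) / m ≤ 1 / a := by
    rw [div_le_div_iff₀ hmR ha]
    linarith
  calc (n.choose m : ℝ) ≤ (n:ℝ) ^ m / m.factorial := Nat.choose_le_pow_div m n
    _ = ((n:ℝ) / m) ^ m * ((m:ℝ) ^ m / m.factorial) := by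
        rw [div_pow, div_mul_div_cancel₀ (pow_ne_zero m hmR.ne')]
    _ ≤ (1 / a) ^ m * Real.exp m := by
        gcongr
        exact Real.pow_div_factorial_le_exp _ hmR.le m
    _ = (Real.exp 1 / a) ^ m := by
        rw [← Real.exp_one_pow, div_pow, div_pow, one_pow]
        ring

lemma pow_le_rpow_half_pow {ρ : ℝ} (h₀ : 0 < ρ) (h₁ : ρ ≤ 1) {d n k : ℕ} (h : n * k ≤ 2 * d) :
    ρ ^ d ≤ (ρ ^ ((n:ℝ) / 2)) ^ k := by
  rw [← Real.rpow_natCast, ← Real.rpow_natCast (ρ ^ _), ← Real.rpow_mul h₀.le]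
  apply Real.rpow_le_rpow_of_exponent_ge h₀ h₁
  have h' : (n:ℝ) * k ≤ 2 * d := by exact_mod_cast h
  linarith

lemma sum_pow_kdist_le {n : ℕ} (θ : Fin n → Bool) (k : ℕ) {t : ℝ} (ht : 0 ≤ t) :
    ∑ η ∈ Theta n with ¬kdist η θ ≤ k, t ^ kdist η θ
      ≤ ∑ m ∈ Ico (k + 1) (n + 1), (n.choose m : ℝ) * t ^ m := by
  rw [← sum_fiberwise_of_maps_to (g := (kdist · θ)) (t := Ico (k + 1) (n + 1))]
  · refine sum_le_sum fun m _ => ?_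
    rw [sum_congr rfl fun η hη => by rw [(mem_filter.1 hη).2], sum_const, nsmul_eq_mul]
    gcongr
    exact (card_le_card (filter_subset_filter _ (filter_subset _ _))).trans
      (card_filter_kdist_eq_le θ m)
  · intro η hη
    have := (mem_filter.1 hη).2
    simp only [mem_Ico, kdist] at this ⊢
    omega

theorem stmt10_general (n : ℕ) (p q : ℝ) (hp : p ∈ Set.Ioo (0:ℝ) 1)
    (hq : q ∈ Set.Ioo (0:ℝ) 1) (θ : Fin n → Bool) (hθ : θ ∈ Theta n)
    (a : ℝ) (ha : a ∈ Set.Ioo (0:ℝ) (1/2))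
    (hsmall : (Real.exp 1 / a) * rho p q ^ ((n : ℝ) / 2) < 1)
    (k : ℕ) (hk : a * n ≤ (k : ℝ)) :
    1 - (1/2) * ((Real.exp 1 / a) * rho p q ^ ((n : ℝ) / 2)) ^ (a * (n : ℝ))
        * (1 - (Real.exp 1 / a) * rho p q ^ ((n : ℝ) / 2))⁻¹
      ≤ expPostMass p q (unifPrior n) θ (hball θ k) := by
  have hρ₀ : 0 < rho p q := rho_pos hp.1 hq.1
  have hρ₁ : rho p q ≤ 1 := rho_le_one (Set.Ioo_subset_Icc_self hp) (Set.Ioo_subset_Icc_self hq)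
  set t := rho p q ^ ((n : ℝ) / 2)
  set r := Real.exp 1 / a * t
  have hr₀ : 0 < r := by have := ha.1; positivity
  have hfar : expPostMass p q (unifPrior n) θ {η ∈ Theta n | ¬kdist η θ ≤ k}
      ≤ 1 / 2 * r ^ (a * n) * (1 - r)⁻¹ := calc
    _ ≤ ∑ η ∈ Theta n with ¬kdist η θ ≤ k, rho p q ^ #(changedEdges θ η) / 2 :=
        expPostMass_le_sum_rho_pow hp hq hθ (filter_subset _ _) (by simp [kdist, hdist])
    _ ≤ ∑ η ∈ Theta n with ¬kdist η θ ≤ k, t ^ kdist η θ / 2 := by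
        gcongr with η
        exact pow_le_rpow_half_pow hρ₀ hρ₁ (mul_kdist_le_two_mul_card_changedEdges θ η)
    _ ≤ (∑ m ∈ Ico (k + 1) (n + 1), (n.choose m : ℝ) * t ^ m) / 2 := by
        rw [← sum_div]
        gcongr
        exact sum_pow_kdist_le θ k (by positivity)
    _ ≤ (∑ m ∈ Ico (k + 1) (n + 1), r ^ m) / 2 := by
        gcongr with m hm
        rw [mul_pow]
        gcongr
        refine choose_le_exp_one_div_pow ha.1 (hk.trans ?_)
        exact_mod_cast Nat.le_of_succ_le (mem_Ico.1 hm).1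
    _ ≤ r ^ (k + 1) / (1 - r) / 2 := by
        gcongr
        exact geom_sum_Ico_le_of_lt_one hr₀.le hsmall
    _ ≤ r ^ (a * n) / (1 - r) / 2 := by
        have : 0 < 1 - r := sub_pos.2 hsmall
        gcongr
        rw [← Real.rpow_natCast]
        exact Real.rpow_le_rpow_of_exponent_ge hr₀ hsmall.le (by push_cast; linarith)
    _ = 1 / 2 * r ^ (a * n) * (1 - r)⁻¹ := by ring
  have hsplit := expPostMass_filter_add_filter_not hp hq hθ (unifPrior_pos n) (kdist · θ ≤ k)
  rw [hball]
  linarith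

/-- lower bound for the expected posterior mass of the Hamming
ball `B_n(θ,k)`, for `k ≥ a n`. -/
theorem stmt10 (n : ℕ) (hn : 2 ≤ n) (p q : ℝ) (hp : p ∈ Set.Ioo (0:ℝ) 1)
    (hq : q ∈ Set.Ioo (0:ℝ) 1) (θ : Fin n → Bool) (hθ : θ ∈ Theta n)
    (a : ℝ) (ha : a ∈ Set.Ioo (0:ℝ) (1/2))
    (hsmall : (Real.exp 1 / a) * rho p q ^ ((n : ℝ) / 2) < 1)
    (k : ℕ) (hk : a * n ≤ (k : ℝ)) :
    1 - (1/2) * ((Real.exp 1 / a) * rho p q ^ ((n : ℝ) / 2)) ^ (a * (n : ℝ))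
        * (1 - (Real.exp 1 / a) * rho p q ^ ((n : ℝ) / 2))⁻¹
      ≤ expPostMass p q (unifPrior n) θ (hball θ k) :=
  stmt10_general n p q hp hq θ hθ a ha hsmall k hk
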